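/- Uniqueness of the DomBal rest point in the interior of the simplex: if γ ∈ ℝ^m has all γ_j > 0, Σ γ_j = 1, and Δ_1^{dombal}(γ) = ... = Δ_m^{dombal}(γ), then γ_j = (φ̃_j + 1/2)^{-1} / Σ_ℓ (φ̃_ℓ + 1/2)^{-1} for all j, where Δ_j^{dombal}(γ) = -γ_j(φ̃_j + 1/2) + (2/m)Σ_s γ_s φ̃_s. -/
import Mathlib


/-- Uniqueness of the DomBal rest point in the interior of the simplex. -/
theorem dombal_rest_point_unique (m : ℕ) (hm : 1 ≤ m)
    (φ : Fin m → ℝ) (hφ : ∀ j, 0 ≤ φ j)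
    (Δ : (Fin m → ℝ) → Fin m → ℝ)
    (hΔ : ∀ γ j, Δ γ j = -γ j * (φ j + 1/2) + (2 / m) * ∑ s, γ s * φ s)
    (γ : Fin m → ℝ) (hpos : ∀ j, 0 < γ j) (hsum : ∑ j, γ j = 1)
    (heq : ∀ j ℓ, Δ γ j = Δ γ ℓ) :
    ∀ j, γ j = (φ j + 1/2)⁻¹ / ∑ ℓ, (φ ℓ + 1/2)⁻¹ := by
  haveI : NeZero m := ⟨by omega⟩
  have hpos2 : ∀ j, (0:ℝ) < φ j + 1/2 := fun j => by have := hφ j; linarith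
  set c : ℝ := γ 0 * (φ 0 + 1/2) with hc
  have hγ : ∀ j, γ j = c * (φ j + 1/2)⁻¹ := by
    intro j
    have h := heq j 0
    rw [hΔ, hΔ] at h
    have h2 : γ j * (φ j + 1/2) = c := by linarith
    have h3 := (eq_div_iff (hpos2 j).ne').mpr h2
    rwa [div_eq_mul_inv] at h3
  have hsum' : c * ∑ ℓ, (φ ℓ + 1/2)⁻¹ = 1 := by
    have h4 : ∑ ℓ, c * (φ ℓ + 1/2)⁻¹ = ∑ ℓ, γ ℓ :=
      Finset.sum_congr rfl fun j _ => (hγ j).symm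
    rw [Finset.mul_sum, h4, hsum]
  have hS : (0:ℝ) < ∑ ℓ, (φ ℓ + 1/2)⁻¹ :=
    Finset.sum_pos (fun ℓ _ => inv_pos.mpr (hpos2 ℓ)) Finset.univ_nonempty
  have hcval : c = (∑ ℓ, (φ ℓ + 1/2)⁻¹)⁻¹ := eq_inv_of_mul_eq_one_left hsum'
  intro j
  rw [hγ j, hcval]
  ring
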